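/- arXiv:2505.19499 — 4 statements merged into one kernel-verified Lean document; each statement's English description precedes it below -/
import Mathlib

section
/- Let V be a finite set and h ∈ ℝ^V. (a) If f : 2^V → ℝ is supermodular with f(∅) = 0, then the minimum of ⟨f^σ, h⟩ = Σ_{u∈V} f^σ(u)·h(u) over all permutations σ of V is attained by any permutation that sorts the elements v ∈ V in non-increasing order of h(v). (b) If g : 2^V → ℝ is submodular with g(∅) = 0, then the minimum of ⟨g^σ, h⟩ over all permutations σ of V is attained by any permutation that sorts the elements v ∈ V in non-decreasing order of h(v). -/
open Finset

variable {V : Type*} [Fintype V] [DecidableEq V]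

/-- A set function is supermodular. -/
def Supermodular (f : Finset V → ℝ) : Prop :=
  ∀ A B : Finset V, f A + f B ≤ f (A ∩ B) + f (A ∪ B)

/-- A set function is submodular. -/
def Submodular (g : Finset V → ℝ) : Prop :=
  ∀ A B : Finset V, g (A ∩ B) + g (A ∪ B) ≤ g A + g B

/-- A set function is monotone. -/
def MonotoneFn (f : Finset V → ℝ) : Prop :=
  ∀ A B : Finset V, A ⊆ B → f A ≤ f B

/-- A set function is strictly monotone. -/
def StrictMonoFn (g : Finset V → ℝ) : Prop :=
  ∀ A B : Finset V, A ⊂ B → g A < g B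

/-- A dual-modular instance `(V; f, g)`: `f` is a nonnegative monotone supermodular
reward function, `g` is a nonnegative strictly monotone submodular cost function,
both vanishing on the empty set. -/
structure DualModular (f g : Finset V → ℝ) : Prop where
  f_nonneg : ∀ A, 0 ≤ f A
  g_nonneg : ∀ A, 0 ≤ g A
  f_empty : f ∅ = 0
  g_empty : g ∅ = 0
  f_mono : MonotoneFn f
  g_strictMono : StrictMonoFn g
  f_supermodular : Supermodular f
  g_submodular : Submodular g

/-- Density of a subset. -/
noncomputable def density (f g : Finset V → ℝ) (S : Finset V) : ℝ := f S / g S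

/-- Marginal contribution `h(S|A) = h(S ∪ A) - h(A)`. -/
def marginal (h : Finset V → ℝ) (S A : Finset V) : ℝ := h (S ∪ A) - h A

/-- Marginal density `ρ(S|A) = f(S|A)/g(S|A)`. -/
noncomputable def margDensity (f g : Finset V → ℝ) (S A : Finset V) : ℝ :=
  marginal f S A / marginal g S A

/-- `S_{<i}`: the union of earlier parts in an indexed family. -/
def below {k : ℕ} (S : Fin k → Finset V) (i : Fin k) : Finset V :=
  (Finset.univ.filter (fun j => j < i)).biUnion S

/-- The density decomposition `V = S₁ ∪ … ∪ S_k`: each `S i` is a nonempty maximal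
densest subset of the remaining instance with marginal functions. -/
structure IsDensityDecomposition (f g : Finset V → ℝ) {k : ℕ} (S : Fin k → Finset V) :
    Prop where
  nonempty : ∀ i, (S i).Nonempty
  disj : ∀ i, Disjoint (S i) (below S i)
  cover : Finset.univ.biUnion S = (Finset.univ : Finset V)
  maxDensity : ∀ i, ∀ T : Finset V, T.Nonempty → Disjoint T (below S i) →
    margDensity f g T (below S i) ≤ margDensity f g (S i) (below S i)
  maximal : ∀ i, ∀ T : Finset V, T.Nonempty → Disjoint T (below S i) →
    margDensity f g (S i) (below S i) ≤ margDensity f g T (below S i) → T ⊆ S i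

/-- `ρ_i`, the density of the `i`-th component of the decomposition. -/
noncomputable def decompDensity (f g : Finset V → ℝ) {k : ℕ} (S : Fin k → Finset V)
    (i : Fin k) : ℝ :=
  margDensity f g (S i) (below S i)

/-- Membership in the base contrapolymatroid `B≥_f`. -/
def memBf (f : Finset V → ℝ) (x : V → ℝ) : Prop :=
  (∀ v, 0 ≤ x v) ∧ (∑ v, x v = f Finset.univ) ∧ ∀ A : Finset V, f A ≤ ∑ v ∈ A, x v

/-- Membership in the base polymatroid `B≤_g`. -/
def memBg (g : Finset V → ℝ) (y : V → ℝ) : Prop :=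
  (∀ v, 0 ≤ y v) ∧ (∑ v, y v = g Finset.univ) ∧ ∀ A : Finset V, ∑ v ∈ A, y v ≤ g A

/-- An allocation is a pair `(x, y) ∈ B≥_f × B≤_g`. -/
def Allocation (f g : Finset V → ℝ) (x y : V → ℝ) : Prop := memBf f x ∧ memBg g y

/-- The locally maximin condition for an allocation. -/
def LocallyMaximin (f g : Finset V → ℝ) (x y : V → ℝ) : Prop :=
  ∀ ρ : ℝ, 0 < ρ →
    (∑ v ∈ Finset.univ.filter (fun v => ρ ≤ x v / y v), x v
       = f (Finset.univ.filter (fun v => ρ ≤ x v / y v))) ∧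
    (∑ v ∈ Finset.univ.filter (fun v => ρ ≤ x v / y v), y v
       = g (Finset.univ.filter (fun v => ρ ≤ x v / y v)))

/-- The multiset of induced densities, sorted in non-increasing order. -/
noncomputable def sortedDensities (x y : V → ℝ) : List ℝ :=
  ((Finset.univ.val.map (fun v => x v / y v)).sort (· ≤ ·)).reverse

/-- An allocation is lexicographically optimal if its non-increasingly sorted density
vector is lexicographically minimal among all allocations. -/
def LexOptimal (f g : Finset V → ℝ) (x y : V → ℝ) : Prop :=
  Allocation f g x y ∧
  ∀ x' y' : V → ℝ, Allocation f g x' y' → sortedDensities x y ≤ sortedDensities x' y'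

/-- The hockey-stick divergence `HS_γ(x ‖ y)`. -/
noncomputable def HS (γ : ℝ) (x y : V → ℝ) : ℝ := ∑ u, max (x u - γ * y u) 0

/-- The `θ`-divergence `D_θ(x ‖ y) = Σ_u y_u · θ(x_u / y_u)`. -/
noncomputable def Dtheta (θ : ℝ → ℝ) (x y : V → ℝ) : ℝ := ∑ u, y u * θ (x u / y u)

/-- Permutations of `V`, encoded as bijections to positions `Fin |V|`;
`u ≺_σ v` iff `σ u < σ v`. -/
abbrev Perms (V : Type*) [Fintype V] := V ≃ Fin (Fintype.card V)

/-- `h^σ(u)`: the marginal contribution of `u` given the elements preceding it in `σ`. -/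
def permVal (h : Finset V → ℝ) (σ : Perms V) (u : V) : ℝ :=
  h (insert u (Finset.univ.filter (fun w => σ w < σ u))) -
    h (Finset.univ.filter (fun w => σ w < σ u))

/-- A probability distribution on permutations of `V`. -/
def IsDist (p : Perms V → ℝ) : Prop := (∀ σ, 0 ≤ p σ) ∧ ∑ σ, p σ = 1

/-- `h^p(u) = Σ_σ p_σ · h^σ(u)`. -/
noncomputable def distVal (h : Finset V → ℝ) (p : Perms V → ℝ) (u : V) : ℝ :=
  ∑ σ, p σ * permVal h σ u

/-- The density induced by a solution `(p, q)`. -/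
noncomputable def solDensity (f g : Finset V → ℝ) (p q : Perms V → ℝ) (v : V) : ℝ :=
  distVal f p v / distVal g q v

/-- A solution `(p, q)` is locally maximin if whenever `u` has strictly larger induced
density than `v`, every permutation with positive weight puts `u` before `v`. -/
def LocallyMaximinSol (f g : Finset V → ℝ) (p q : Perms V → ℝ) : Prop :=
  ∀ u v : V, solDensity f g p q v < solDensity f g p q u →
    ∀ σ : Perms V, (0 < p σ ∨ 0 < q σ) → σ u < σ v

/-- The convex-program objective `Φ_θ(p, q) = D_θ(f^p ‖ g^q)`. -/
noncomputable def Phi (θ : ℝ → ℝ) (f g : Finset V → ℝ) (p q : Perms V → ℝ) : ℝ :=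
  Dtheta θ (distVal f p) (distVal g q)

/-!
Order `V` along `σ` and apply Abel summation: when `h` is non-decreasing along `σ`, the
pairing `⟨x, h⟩` only depends on the total of `x` and on its sums over the `σ`-prefixes, and it
decreases as those prefix sums grow. For submodular `g`, the greedy vector `g^σ` sums to
`g(P) - g(∅)` on each `σ`-prefix `P`, whereas by diminishing returns every `g^τ` sums to at most
`g(A) - g(∅)` on every set `A`, with equality for `A = V`. The supermodular case is the
submodular one applied to `-f` and `-h`.
-/

theorem Finset.sum_mul_le_sum_mul_of_sum_range_le {a b c : ℕ → ℝ} {n : ℕ}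
    (hc : MonotoneOn c (Set.Iio n))
    (htot : ∑ i ∈ range n, a i = ∑ i ∈ range n, b i)
    (hpre : ∀ k < n, ∑ i ∈ range k, b i ≤ ∑ i ∈ range k, a i) :
    ∑ i ∈ range n, a i * c i ≤ ∑ i ∈ range n, b i * c i := by
  simp only [mul_comm _ (c _), ← smul_eq_mul]
  rw [sum_range_by_parts c a, sum_range_by_parts c b, htot]
  apply sub_le_sub_left
  refine sum_le_sum fun i hi => ?_
  have hi' : i + 1 < n := by grind
  exact smul_le_smul_of_nonneg_left (hpre _ hi')
    (sub_nonneg.mpr (hc (Set.mem_Iio.mpr (by omega)) hi' (by omega)))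

section Ordering

omit [DecidableEq V]

variable {n : ℕ} (σ : V ≃ Fin n)

def prefixSet (k : ℕ) : Finset V := univ.filter fun u => (σ u : ℕ) < k

def orderedSeq (x : V → ℝ) (i : ℕ) : ℝ := if hi : i < n then x (σ.symm ⟨i, hi⟩) else 0

theorem prefixSet_of_le {k : ℕ} (hk : n ≤ k) : prefixSet σ k = univ :=
  filter_true_of_mem fun u _ => (σ u).isLt.trans_le hk

theorem sum_range_orderedSeq (x : V → ℝ) {k : ℕ} (hk : k ≤ n) :
    ∑ i ∈ range k, orderedSeq σ x i = ∑ u ∈ prefixSet σ k, x u := by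
  refine sum_bij' (fun i hi => σ.symm ⟨i, by grind⟩) (fun u _ => σ u) ?_ ?_ ?_ ?_ ?_
  all_goals intros; simp_all [prefixSet, orderedSeq]
  all_goals grind

theorem sum_mul_le_sum_mul_of_prefixSet {h x y : V → ℝ}
    (hh : ∀ u v, σ u < σ v → h u ≤ h v) (htot : ∑ u, x u = ∑ u, y u)
    (hpre : ∀ k < n, ∑ u ∈ prefixSet σ k, y u ≤ ∑ u ∈ prefixSet σ k, x u) :
    ∑ u, x u * h u ≤ ∑ u, y u * h u := by
  have hsum (z : V → ℝ) : ∑ u, z u = ∑ i ∈ range n, orderedSeq σ z i := by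
    rw [sum_range_orderedSeq σ z le_rfl, prefixSet_of_le σ le_rfl]
  have hmul (z : V → ℝ) :
      ∑ u, z u * h u = ∑ i ∈ range n, orderedSeq σ z i * orderedSeq σ h i := by
    rw [hsum fun u => z u * h u]
    exact sum_congr rfl fun i hi => by simp [orderedSeq, mem_range.mp hi]
  rw [hmul, hmul]
  refine sum_mul_le_sum_mul_of_sum_range_le ?_ (by rwa [← hsum, ← hsum]) fun k hk => ?_
  · intro i hi j hj hij
    simp only [orderedSeq, dif_pos (show i < n from hi), dif_pos (show j < n from hj)]
    rcases hij.lt_or_eq with hij | rfl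
    · exact hh _ _ (by simpa using hij)
    · rfl
  · simpa only [sum_range_orderedSeq σ _ hk.le] using hpre k hk

end Ordering

theorem insert_prefixSet (σ : Perms V) (u : V) :
    insert u (prefixSet σ (σ u)) = prefixSet σ (σ u + 1) := by
  ext w
  simp only [prefixSet, mem_insert, mem_filter, mem_univ, true_and]
  grind [σ.injective.eq_iff, Fin.ext_iff]

theorem permVal_eq_sub (g : Finset V → ℝ) (σ : Perms V) (u : V) :
    permVal g σ u = g (prefixSet σ (σ u + 1)) - g (prefixSet σ (σ u)) := by
  rw [← insert_prefixSet]
  rfl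

theorem sum_prefixSet_permVal (g : Finset V → ℝ) (σ : Perms V) {k : ℕ}
    (hk : k ≤ Fintype.card V) :
    ∑ u ∈ prefixSet σ k, permVal g σ u = g (prefixSet σ k) - g ∅ := by
  rw [← sum_range_orderedSeq σ _ hk]
  have hstep : ∀ i ∈ range k, orderedSeq σ (permVal g σ) i
      = g (prefixSet σ (i + 1)) - g (prefixSet σ i) := fun i hi => by
    simp [orderedSeq, (mem_range.mp hi).trans_le hk, permVal_eq_sub]
  rw [sum_congr rfl hstep, sum_range_sub (fun i => g (prefixSet σ i))]
  simp [prefixSet]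

theorem sum_permVal (g : Finset V → ℝ) (σ : Perms V) : ∑ u, permVal g σ u = g univ - g ∅ := by
  simpa only [prefixSet_of_le σ le_rfl] using sum_prefixSet_permVal g σ le_rfl

omit [Fintype V] in
theorem Submodular.sub_le_sub_of_subset {g : Finset V → ℝ} (hg : Submodular g)
    {B C : Finset V} {u : V} (hBC : B ⊆ C) (hu : u ∉ C) :
    g (insert u C) - g C ≤ g (insert u B) - g B := by
  have := hg (insert u B) C
  rw [insert_inter_of_notMem hu, inter_eq_left.mpr hBC, insert_union,
    union_eq_right.mpr hBC] at this
  linarith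

theorem Submodular.sum_permVal_le {g : Finset V → ℝ} (hg : Submodular g) (σ : Perms V)
    (A : Finset V) : ∑ u ∈ A, permVal g σ u ≤ g A - g ∅ := by
  induction A using Finset.strongInduction with
  | H A ih =>
    rcases A.eq_empty_or_nonempty with rfl | hA
    · simp
    obtain ⟨u, hu, hmax⟩ := A.exists_max_image σ hA
    have hsub : A.erase u ⊆ prefixSet σ (σ u) := fun w hw => by
      simp only [prefixSet, mem_filter, mem_univ, true_and]
      grind [σ.injective.eq_iff, Fin.ext_iff]
    have hu' : u ∉ prefixSet σ (σ u) := by simp [prefixSet]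
    have hmarg := hg.sub_le_sub_of_subset hsub hu'
    rw [insert_erase hu, insert_prefixSet] at hmarg
    rw [← sum_erase_add A _ hu, permVal_eq_sub]
    linarith [ih _ (erase_ssubset hu)]

theorem Submodular.sum_permVal_mul_le {g : Finset V → ℝ} (hg : Submodular g) {h : V → ℝ}
    {σ : Perms V} (hσ : ∀ u v, σ u < σ v → h u ≤ h v) (τ : Perms V) :
    ∑ u, permVal g σ u * h u ≤ ∑ u, permVal g τ u * h u := by
  refine sum_mul_le_sum_mul_of_prefixSet σ hσ (by rw [sum_permVal, sum_permVal]) fun k hk => ?_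
  rw [sum_prefixSet_permVal g σ hk.le]
  exact hg.sum_permVal_le τ _

omit [Fintype V] in
theorem Supermodular.submodular_neg {f : Finset V → ℝ} (hf : Supermodular f) :
    Submodular (-f) := fun A B => by
  simp only [Pi.neg_apply]
  linarith [hf A B]

theorem permVal_neg (f : Finset V → ℝ) (σ : Perms V) (u : V) :
    permVal (-f) σ u = -permVal f σ u := by
  simp only [permVal, Pi.neg_apply]
  ring

theorem Supermodular.sum_permVal_mul_le {f : Finset V → ℝ} (hf : Supermodular f) {h : V → ℝ}
    {σ : Perms V} (hσ : ∀ u v, σ u < σ v → h v ≤ h u) (τ : Perms V) :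
    ∑ u, permVal f σ u * h u ≤ ∑ u, permVal f τ u * h u := by
  have := hf.submodular_neg.sum_permVal_mul_le (h := -h) (fun u v huv => neg_le_neg (hσ u v huv)) τ
  simpa only [permVal_neg, Pi.neg_apply, neg_mul_neg] using this

/-- Fact 5.1, dot-product optimization: for supermodular `f`,
`⟨f^σ, h⟩` is minimized by any permutation sorting `V` in non-increasing order of `h`;
for submodular `g`, `⟨g^σ, h⟩` is minimized by sorting in non-decreasing order. -/
theorem dot_product_optimization (h : V → ℝ) :
    (∀ f : Finset V → ℝ, Supermodular f → f ∅ = 0 →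
      ∀ σ : Perms V, (∀ u v : V, σ u < σ v → h v ≤ h u) →
        ∀ τ : Perms V, ∑ u, permVal f σ u * h u ≤ ∑ u, permVal f τ u * h u) ∧
    (∀ g : Finset V → ℝ, Submodular g → g ∅ = 0 →
      ∀ σ : Perms V, (∀ u v : V, σ u < σ v → h u ≤ h v) →
        ∀ τ : Perms V, ∑ u, permVal g σ u * h u ≤ ∑ u, permVal g τ u * h u) :=
  ⟨fun _ hf _ _ hσ τ => hf.sum_permVal_mul_le hσ τ,
    fun _ hg _ _ hσ τ => hg.sum_permVal_mul_le hσ τ⟩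
end

section
/- Let (V; f, g) be a dual-modular instance and θ : ℝ≥0 → ℝ a differentiable convex function. Let p be any probability distribution on permutations of V, with induced densities ρ^p_v = f^p(v)/g^p(v). Then any permutation σ obtained by sorting the elements v ∈ V in non-increasing order of ρ^p_v minimizes, over all permutations σ' of V, the quantity Σ_{v∈V} f^{σ'}(v)·θ'(ρ^p_v) + Σ_{v∈V} g^{σ'}(v)·( θ(ρ^p_v) − ρ^p_v·θ'(ρ^p_v) ). -/
open Finset

variable {V : Type*} [Fintype V] [DecidableEq V]

section AuxLemmas

variable {V : Type*} [Fintype V] [DecidableEq V]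

lemma permVal_nonneg (f : Finset V → ℝ) (hf : MonotoneFn f) (τ : Perms V) (u : V) :
    0 ≤ permVal f τ u :=
  sub_nonneg.mpr (hf _ _ (Finset.subset_insert u _))

/-- Telescoping over a downward-closed set. -/
lemma closed_sum_eq (h : Finset V → ℝ) (h0 : h ∅ = 0) (τ : Perms V) :
    ∀ S : Finset V, (∀ v ∈ S, ∀ w : V, τ w < τ v → w ∈ S) →
      ∑ v ∈ S, permVal h τ v = h S := by
  intro S
  induction S using Finset.strongInduction with
  | _ S ih =>
    intro hcl
    rcases S.eq_empty_or_nonempty with rfl | hne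
    · simp [h0]
    · obtain ⟨u, hu, hmax⟩ := S.exists_max_image (fun v => τ v) hne
      have hP : Finset.univ.filter (fun w => τ w < τ u) = S.erase u := by
        ext w
        simp only [Finset.mem_filter, Finset.mem_univ, true_and, Finset.mem_erase]
        constructor
        · intro hw
          exact ⟨fun hwu => absurd hw (by simp [hwu]), hcl u hu w hw⟩
        · rintro ⟨hwu, hwS⟩
          exact lt_of_le_of_ne (hmax w hwS) (fun he => hwu (τ.injective he))
      have hins : insert u (S.erase u) = S := Finset.insert_erase hu
      have hcl' : ∀ v ∈ S.erase u, ∀ w : V, τ w < τ v → w ∈ S.erase u := by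
        intro v hv w hw
        have hvS := Finset.mem_of_mem_erase hv
        have hvu : τ v < τ u :=
          lt_of_le_of_ne (hmax v hvS) (fun he => (Finset.ne_of_mem_erase hv) (τ.injective he))
        exact Finset.mem_erase.mpr ⟨fun he => absurd (he ▸ hw) (not_lt.mpr hvu.le),
          hcl v hvS w hw⟩
      have := ih (S.erase u) (Finset.erase_ssubset hu) hcl'
      rw [← Finset.add_sum_erase S _ hu, this, permVal, hP, hins]
      ring

/-- Supermodular lower bound. -/
lemma supermodular_le_sum (h : Finset V → ℝ) (h0 : h ∅ = 0) (hsup : Supermodular h)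
    (τ : Perms V) : ∀ S : Finset V, h S ≤ ∑ v ∈ S, permVal h τ v := by
  intro S
  induction S using Finset.strongInduction with
  | _ S ih =>
    rcases S.eq_empty_or_nonempty with rfl | hne
    · simp [h0]
    · obtain ⟨u, hu, hmax⟩ := S.exists_max_image (fun v => τ v) hne
      set P := Finset.univ.filter (fun w => τ w < τ u) with hPdef
      have huP : u ∉ P := by simp [hPdef]
      have hSP : S.erase u ⊆ P := by
        intro w hw
        simp only [hPdef, Finset.mem_filter, Finset.mem_univ, true_and]
        exact lt_of_le_of_ne (hmax w (Finset.mem_of_mem_erase hw))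
          (fun he => (Finset.ne_of_mem_erase hw) (τ.injective he))
      have hcap : insert u (S.erase u) ∩ P = S.erase u := by
        ext w
        simp only [Finset.mem_inter, Finset.mem_insert]
        constructor
        · rintro ⟨hw1 | hw1, hw2⟩
          · exact absurd hw2 (hw1 ▸ huP)
          · exact hw1
        · intro hw; exact ⟨Or.inr hw, hSP hw⟩
      have hcup : insert u (S.erase u) ∪ P = insert u P := by
        ext w
        simp only [Finset.mem_union, Finset.mem_insert]
        constructor
        · rintro (⟨hw | hw⟩ | hw)
          · exact Or.inl hw
          · exact Or.inr (hSP hw)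
          · exact Or.inr hw
        · rintro (hw | hw)
          · exact Or.inl (Or.inl hw)
          · exact Or.inr hw
      have hkey := hsup (insert u (S.erase u)) P
      rw [hcap, hcup] at hkey
      have hins : insert u (S.erase u) = S := Finset.insert_erase hu
      rw [hins] at hkey
      have hmarg : h S - h (S.erase u) ≤ permVal h τ u := by
        rw [permVal]; linarith
      have := ih (S.erase u) (Finset.erase_ssubset hu)
      rw [← Finset.add_sum_erase S _ hu]
      linarith

/-- Submodular upper bound. -/
lemma sum_le_submodular (g : Finset V → ℝ) (g0 : g ∅ = 0) (hsub : Submodular g)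
    (τ : Perms V) (S : Finset V) : ∑ v ∈ S, permVal g τ v ≤ g S := by
  have hsup : Supermodular (fun A => -(g A)) := by
    intro A B
    have := hsub A B
    simp only
    linarith
  have := supermodular_le_sum (fun A => -(g A)) (by simp [g0]) hsup τ S
  have hpv : ∀ v, permVal (fun A => -(g A)) τ v = -(permVal g τ v) := by
    intro v; simp [permVal]; ring
  simp only [hpv, Finset.sum_neg_distrib] at this
  linarith

/-- Abel/layer-cake identity over the prefixes of the permutation `σ`. -/
lemma layer_identity (σ : Perms V) (x a : V → ℝ) (b : ℕ → ℝ)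
    (hb : ∀ i : Fin (Fintype.card V), b i = a (σ.symm i))
    (hbn : b (Fintype.card V) = 0) :
    ∑ v, x v * a v =
      ∑ j ∈ Finset.range (Fintype.card V), (b j - b (j + 1)) *
        ∑ v ∈ Finset.univ.filter (fun v => (σ v : ℕ) ≤ j), x v := by
  have step : ∀ j ∈ Finset.range (Fintype.card V),
      (b j - b (j + 1)) * ∑ v ∈ Finset.univ.filter (fun v => (σ v : ℕ) ≤ j), x v
        = ∑ v, (if (σ v : ℕ) ≤ j then (b j - b (j + 1)) * x v else 0) := by
    intro j _
    rw [Finset.sum_filter, Finset.mul_sum]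
    exact Finset.sum_congr rfl (fun v _ => by split <;> simp
)
  rw [Finset.sum_congr rfl step, Finset.sum_comm]
  refine Finset.sum_congr rfl (fun v _ => ?_)
  have h1 : ∑ j ∈ Finset.range (Fintype.card V),
      (if (σ v : ℕ) ≤ j then (b j - b (j + 1)) * x v else 0)
      = ∑ j ∈ Finset.Ico ((σ v : ℕ)) (Fintype.card V), (b j - b (j + 1)) * x v := by
    rw [← Finset.sum_filter]
    congr 1
    ext j
    simp only [Finset.mem_filter, Finset.mem_range, Finset.mem_Ico]
    tauto
  rw [h1, ← Finset.sum_mul]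
  have htel : ∑ j ∈ Finset.Ico ((σ v : ℕ)) (Fintype.card V), (b j - b (j + 1))
      = b ((σ v : ℕ)) - b (Fintype.card V) := by
    rw [Finset.sum_Ico_eq_sub _ (le_of_lt (σ v).isLt), Finset.sum_range_sub' b,
      Finset.sum_range_sub' b]
    ring
  rw [htel, hbn, sub_zero]
  have : b ((σ v : ℕ)) = a v := by
    have := hb (σ v)
    rwa [Equiv.symm_apply_apply] at this
  rw [this]; ring

end AuxLemmas


/-- Lemma 5.2: for a differentiable convex `θ`, any permutation sorting
the elements in non-increasing order of the induced densities `ρ^p` minimizes the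
gradient expression `Σ_v f^σ(v)·θ'(ρ^p_v) + Σ_v g^σ(v)·(θ(ρ^p_v) − ρ^p_v·θ'(ρ^p_v))`. -/
theorem greedy_permutation_minimizes_gradient (f g : Finset V → ℝ)
    (hdm : DualModular f g) (θ θ' : ℝ → ℝ)
    (hθ : ConvexOn ℝ (Set.Ici 0) θ)
    (hθ' : ∀ t ∈ Set.Ici (0 : ℝ), HasDerivWithinAt θ (θ' t) (Set.Ici 0) t)
    (p : Perms V → ℝ) (hp : IsDist p)
    (σ : Perms V)
    (hsort : ∀ u v : V, σ u < σ v → solDensity f g p p v ≤ solDensity f g p p u) :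
    ∀ τ : Perms V,
      (∑ v, permVal f σ v * θ' (solDensity f g p p v)) +
        (∑ v, permVal g σ v *
          (θ (solDensity f g p p v) -
            solDensity f g p p v * θ' (solDensity f g p p v)))
      ≤
      (∑ v, permVal f τ v * θ' (solDensity f g p p v)) +
        (∑ v, permVal g τ v *
          (θ (solDensity f g p p v) -
            solDensity f g p p v * θ' (solDensity f g p p v))) := by
  intro τ
  classical
  have hgm : MonotoneFn g := by
    intro A B hAB
    by_cases hEq : A = B
    · exact le_of_eq (by rw [hEq])
    · exact (hdm.g_strictMono A B (Finset.ssubset_iff_subset_ne.mpr ⟨hAB, hEq⟩)).le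
  have hρ0 : ∀ v, 0 ≤ solDensity f g p p v := by
    intro v
    simp only [solDensity, distVal]
    apply div_nonneg
    · exact Finset.sum_nonneg fun π _ => mul_nonneg (hp.1 π) (permVal_nonneg f hdm.f_mono π v)
    · exact Finset.sum_nonneg fun π _ => mul_nonneg (hp.1 π) (permVal_nonneg g hgm π v)
  have hmono : ∀ s t : ℝ, 0 ≤ s → s ≤ t → θ' s ≤ θ' t := by
    intro s t hs hst
    rcases eq_or_lt_of_le hst with rfl | hlt
    · exact le_refl _
    · have ht : (0:ℝ) ≤ t := hs.trans hst
      exact (hθ.le_slope_of_hasDerivWithinAt (Set.mem_Ici.mpr hs) (Set.mem_Ici.mpr ht) hlt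
          (hθ' s (Set.mem_Ici.mpr hs))).trans
        (hθ.slope_le_of_hasDerivWithinAt (Set.mem_Ici.mpr hs) (Set.mem_Ici.mpr ht) hlt
          (hθ' t (Set.mem_Ici.mpr ht)))
  have htangent : ∀ s t : ℝ, 0 ≤ s → s ≤ t →
      θ t - t * θ' t ≤ θ s - s * θ' s := by
    intro s t hs hst
    rcases eq_or_lt_of_le hst with rfl | hlt
    · exact le_refl _
    · have ht : (0:ℝ) ≤ t := hs.trans hst
      have h2 := hθ.slope_le_of_hasDerivWithinAt (Set.mem_Ici.mpr hs) (Set.mem_Ici.mpr ht) hlt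
        (hθ' t (Set.mem_Ici.mpr ht))
      rw [slope_def_field, div_le_iff₀ (by linarith)] at h2
      have h4 : s * θ' s ≤ s * θ' t := mul_le_mul_of_nonneg_left (hmono s t hs hst) hs
      nlinarith [h2, h4]
  set bf : ℕ → ℝ := fun j =>
    if h : j < Fintype.card V then θ' (solDensity f g p p (σ.symm ⟨j, h⟩)) else 0 with hbf
  set be : ℕ → ℝ := fun j =>
    if h : j < Fintype.card V then
      θ (solDensity f g p p (σ.symm ⟨j, h⟩)) -
        solDensity f g p p (σ.symm ⟨j, h⟩) * θ' (solDensity f g p p (σ.symm ⟨j, h⟩))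
    else 0 with hbe
  have hbfi : ∀ i : Fin (Fintype.card V),
      bf i = θ' (solDensity f g p p (σ.symm i)) := by
    intro i
    have he : (⟨(i : ℕ), i.isLt⟩ : Fin (Fintype.card V)) = i := Fin.eta i i.isLt
    rw [hbf]
    simp only
    rw [dif_pos i.isLt, he]
  have hbei : ∀ i : Fin (Fintype.card V),
      be i = θ (solDensity f g p p (σ.symm i)) -
        solDensity f g p p (σ.symm i) * θ' (solDensity f g p p (σ.symm i)) := by
    intro i
    have he : (⟨(i : ℕ), i.isLt⟩ : Fin (Fintype.card V)) = i := Fin.eta i i.isLt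
    rw [hbe]
    simp only
    rw [dif_pos i.isLt, he]
  have hbfn : bf (Fintype.card V) = 0 := by rw [hbf]; simp
  have hben : be (Fintype.card V) = 0 := by rw [hbe]; simp
  have hkey : ∀ π : Perms V,
      (∑ v, permVal f π v * θ' (solDensity f g p p v)) +
        (∑ v, permVal g π v *
          (θ (solDensity f g p p v) -
            solDensity f g p p v * θ' (solDensity f g p p v)))
      = ∑ j ∈ Finset.range (Fintype.card V),
          ((bf j - bf (j + 1)) *
              ∑ v ∈ Finset.univ.filter (fun v => (σ v : ℕ) ≤ j), permVal f π v
            + (be j - be (j + 1)) *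
              ∑ v ∈ Finset.univ.filter (fun v => (σ v : ℕ) ≤ j), permVal g π v) := by
    intro π
    have h1 : (∑ v, permVal f π v * θ' (solDensity f g p p v))
        = ∑ j ∈ Finset.range (Fintype.card V), (bf j - bf (j + 1)) *
            ∑ v ∈ Finset.univ.filter (fun v => (σ v : ℕ) ≤ j), permVal f π v :=
      layer_identity σ (fun v => permVal f π v)
        (fun v => θ' (solDensity f g p p v)) bf hbfi hbfn
    have h2 : (∑ v, permVal g π v *
          (θ (solDensity f g p p v) -
            solDensity f g p p v * θ' (solDensity f g p p v)))
        = ∑ j ∈ Finset.range (Fintype.card V), (be j - be (j + 1)) *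
            ∑ v ∈ Finset.univ.filter (fun v => (σ v : ℕ) ≤ j), permVal g π v :=
      layer_identity σ (fun v => permVal g π v)
        (fun v => θ (solDensity f g p p v) -
          solDensity f g p p v * θ' (solDensity f g p p v)) be hbei hben
    rw [h1, h2, ← Finset.sum_add_distrib]
  rw [hkey σ, hkey τ]
  apply Finset.sum_le_sum
  intro j hj
  have hjn : j < Fintype.card V := Finset.mem_range.mp hj
  by_cases hj1 : j + 1 < Fintype.card V
  · have hcl : ∀ v ∈ Finset.univ.filter (fun v => (σ v : ℕ) ≤ j), ∀ w : V,
        σ w < σ v → w ∈ Finset.univ.filter (fun v => (σ v : ℕ) ≤ j) := by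
      intro v hv w hw
      simp only [Finset.mem_filter, Finset.mem_univ, true_and] at hv ⊢
      have hww : (σ w : ℕ) < (σ v : ℕ) := hw
      omega
    have hFfσ := closed_sum_eq f hdm.f_empty σ _ hcl
    have hFgσ := closed_sum_eq g hdm.g_empty σ _ hcl
    have hFfτ := supermodular_le_sum f hdm.f_empty hdm.f_supermodular τ
      (Finset.univ.filter (fun v => (σ v : ℕ) ≤ j))
    have hFgτ := sum_le_submodular g hdm.g_empty hdm.g_submodular τ
      (Finset.univ.filter (fun v => (σ v : ℕ) ≤ j))
    have hlt : σ (σ.symm ⟨j, hjn⟩) < σ (σ.symm ⟨j + 1, hj1⟩) := by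
      rw [Equiv.apply_symm_apply, Equiv.apply_symm_apply]
      exact Fin.mk_lt_mk.mpr (Nat.lt_succ_self j)
    have hρle := hsort _ _ hlt
    have hbfj : bf j = θ' (solDensity f g p p (σ.symm ⟨j, hjn⟩)) := by
      rw [hbf]; simp only; rw [dif_pos hjn]
    have hbfj1 : bf (j + 1) = θ' (solDensity f g p p (σ.symm ⟨j + 1, hj1⟩)) := by
      rw [hbf]; simp only; rw [dif_pos hj1]
    have hbej : be j = θ (solDensity f g p p (σ.symm ⟨j, hjn⟩)) -
        solDensity f g p p (σ.symm ⟨j, hjn⟩) *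
          θ' (solDensity f g p p (σ.symm ⟨j, hjn⟩)) := by
      rw [hbe]; simp only; rw [dif_pos hjn]
    have hbej1 : be (j + 1) = θ (solDensity f g p p (σ.symm ⟨j + 1, hj1⟩)) -
        solDensity f g p p (σ.symm ⟨j + 1, hj1⟩) *
          θ' (solDensity f g p p (σ.symm ⟨j + 1, hj1⟩)) := by
      rw [hbe]; simp only; rw [dif_pos hj1]
    have hcf : 0 ≤ bf j - bf (j + 1) := by
      rw [hbfj, hbfj1]
      exact sub_nonneg.mpr (hmono _ _ (hρ0 _) hρle)
    have hce : be j - be (j + 1) ≤ 0 := by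
      rw [hbej, hbej1]
      exact sub_nonpos.mpr (htangent _ _ (hρ0 _) hρle)
    have h1 := mul_le_mul_of_nonneg_left hFfτ hcf
    have h2 := mul_le_mul_of_nonpos_left hFgτ hce
    rw [hFfσ, hFgσ]
    linarith
  · have hAu : Finset.univ.filter (fun v => (σ v : ℕ) ≤ j) = (Finset.univ : Finset V) := by
      ext v
      simp only [Finset.mem_filter, Finset.mem_univ, true_and, iff_true]
      have := (σ v).isLt
      omega
    rw [hAu]
    have htriv : ∀ (π : Perms V) (h : Finset V → ℝ), h ∅ = 0 →
        ∑ v ∈ Finset.univ, permVal h π v = h Finset.univ := fun π h h0 =>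
      closed_sum_eq h h0 π Finset.univ (fun v _ w _ => Finset.mem_univ w)
    rw [htriv σ f hdm.f_empty, htriv σ g hdm.g_empty,
        htriv τ f hdm.f_empty, htriv τ g hdm.g_empty]
end

section
/- Let (V; f, g) be a dual-modular instance normalized so that f(V) = g(V) = 1, and set g_min = min_{u∈V} min_{y ∈ B≤_g} y_u > 0. Let Φ(x, y) = Σ_{u∈V} x_u² / y_u. Let (x*, y*) be a minimizer of Φ over all allocations, with induced densities ρ*_u = x*_u / y*_u (which equal the density-decomposition densities). Then for every allocation (x, y) with induced densities ρ_u = x_u / y_u: Φ(x, y) − Φ(x*, y*) ≥ g_min² · Σ_{u∈V} (ρ_u − ρ*_u)². -/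
open Finset

variable {V : Type*} [Fintype V] [DecidableEq V]

/-- Per-coordinate strong-convexity gap for the perspective of `t ↦ t²`. -/
lemma key_coord (gmin a b p q : ℝ) (hg : 0 < gmin) (hg2 : gmin ≤ 1/2)
    (hp : gmin ≤ p) (hq : gmin ≤ q) :
    gmin ^ 2 * (a / p - b / q) ^ 2 ≤ a ^ 2 / p + b ^ 2 / q - (a + b) ^ 2 / (p + q) := by
  have hp0 : 0 < p := lt_of_lt_of_le hg hp
  have hq0 : 0 < q := lt_of_lt_of_le hg hq
  have hpq0 : 0 < p + q := by linarith
  have hdiff : a ^ 2 / p + b ^ 2 / q - (a + b) ^ 2 / (p + q)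
      = (a * q - b * p) ^ 2 / (p * q * (p + q)) := by
    field_simp
    ring
  have hl : gmin ^ 2 * (a / p - b / q) ^ 2
      = gmin ^ 2 * (a * q - b * p) ^ 2 / (p ^ 2 * q ^ 2) := by
    field_simp
  rw [hdiff, hl]
  rw [div_le_div_iff₀ (by positivity) (by positivity)]
  have hkey : gmin ^ 2 * (p + q) ≤ p * q := by
    nlinarith [mul_le_mul_of_nonneg_right (mul_le_mul_of_nonneg_left hq hg.le) hp0.le,
      mul_le_mul_of_nonneg_right (mul_le_mul_of_nonneg_left hp hg.le) hq0.le,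
      mul_nonneg (mul_pos hp0 hq0).le (by linarith : (0:ℝ) ≤ 1 - 2 * gmin)]
  nlinarith [mul_le_mul_of_nonneg_left hkey
    (mul_nonneg (sq_nonneg (a * q - b * p)) (mul_pos hp0 hq0).le)]

/-- with normalization `f(V) = g(V) = 1` and `g_min` a positive lower
bound on all coordinates of points of `B≤_g`, for the quadratic objective
`Φ(x,y) = Σ_u x_u²/y_u` and any minimizer `(x*, y*)`, every allocation `(x, y)`
satisfies `Φ(x, y) − Φ(x*, y*) ≥ g_min² · Σ_u (ρ_u − ρ*_u)²`. -/
theorem quadratic_error_lower_bound (f g : Finset V → ℝ) (hdm : DualModular f g)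
    (hfV : f Finset.univ = 1) (hgV : g Finset.univ = 1)
    (gmin : ℝ) (hgmin_pos : 0 < gmin)
    (hgmin : ∀ y : V → ℝ, memBg g y → ∀ u, gmin ≤ y u)
    (xs ys : V → ℝ) (hstar : Allocation f g xs ys)
    (hmin : ∀ x y : V → ℝ, Allocation f g x y →
      (∑ u, (xs u) ^ 2 / ys u) ≤ ∑ u, (x u) ^ 2 / y u) :
    ∀ x y : V → ℝ, Allocation f g x y →
      gmin ^ 2 * ∑ u, (x u / y u - xs u / ys u) ^ 2 ≤
        (∑ u, (x u) ^ 2 / y u) - ∑ u, (xs u) ^ 2 / ys u := by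
  intro x y hxy
  -- trivial cases on the cardinality of V
  rcases Nat.lt_or_ge (Fintype.card V) 2 with hcard | hcard
  · interval_cases h : Fintype.card V
    · have : IsEmpty V := Fintype.card_eq_zero_iff.mp h
      simp
    · obtain ⟨u, hu⟩ := Fintype.card_eq_one_iff.mp h
      have huniv : (Finset.univ : Finset V) = {u} := by
        ext v; simp [hu v]
      rw [huniv] at hfV hgV
      have hx1 : x u = 1 := by
        have := hxy.1.2.1; rwa [huniv, Finset.sum_singleton, hfV] at this
      have hy1 : y u = 1 := by
        have := hxy.2.2.1; rwa [huniv, Finset.sum_singleton, hgV] at this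
      have hxs1 : xs u = 1 := by
        have := hstar.1.2.1; rwa [huniv, Finset.sum_singleton, hfV] at this
      have hys1 : ys u = 1 := by
        have := hstar.2.2.1; rwa [huniv, Finset.sum_singleton, hgV] at this
      rw [huniv]
      simp [hx1, hy1, hxs1, hys1]
  -- main case: |V| ≥ 2, hence gmin ≤ 1/2
  have hg2 : gmin ≤ 1 / 2 := by
    have h1 : (Fintype.card V : ℝ) * gmin ≤ 1 := by
      calc (Fintype.card V : ℝ) * gmin = ∑ _v : V, gmin := by
            simp [Finset.sum_const, mul_comm]
        _ ≤ ∑ v, ys v := Finset.sum_le_sum fun v _ => hgmin ys hstar.2 v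
        _ = 1 := by rw [hstar.2.2.1, hgV]
    have h2 : (2 : ℝ) ≤ (Fintype.card V : ℝ) := by exact_mod_cast hcard
    nlinarith
  -- the midpoint is an allocation
  set xm : V → ℝ := fun v => (x v + xs v) / 2 with hxm
  set ym : V → ℝ := fun v => (y v + ys v) / 2 with hym
  have hmid : Allocation f g xm ym := by
    obtain ⟨⟨hxn, hxs, hxA⟩, ⟨hyn, hys, hyA⟩⟩ := hxy
    obtain ⟨⟨hxn', hxs', hxA'⟩, ⟨hyn', hys', hyA'⟩⟩ := hstar
    refine ⟨⟨fun v => by simp only [hxm]; linarith [hxn v, hxn' v], ?_, fun A => ?_⟩,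
      ⟨fun v => by simp only [hym]; linarith [hyn v, hyn' v], ?_, fun A => ?_⟩⟩
    · simp only [hxm]
      rw [← Finset.sum_div, Finset.sum_add_distrib, hxs, hxs']
      ring
    · simp only [hxm]
      rw [← Finset.sum_div, Finset.sum_add_distrib]
      linarith [hxA A, hxA' A]
    · simp only [hym]
      rw [← Finset.sum_div, Finset.sum_add_distrib, hys, hys']
      ring
    · simp only [hym]
      rw [← Finset.sum_div, Finset.sum_add_distrib]
      linarith [hyA A, hyA' A]
  have hopt : ∑ u, (xs u) ^ 2 / ys u ≤ ∑ u, (xm u) ^ 2 / ym u := hmin xm ym hmid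
  -- per-coordinate lower bound
  have hptwise : ∀ u : V,
      gmin ^ 2 * (x u / y u - xs u / ys u) ^ 2 ≤
        (x u) ^ 2 / y u + (xs u) ^ 2 / ys u - 2 * ((xm u) ^ 2 / ym u) := by
    intro u
    have hy := hgmin y hxy.2 u
    have hys := hgmin ys hstar.2 u
    have h := key_coord gmin (x u) (xs u) (y u) (ys u) hgmin_pos hg2 hy hys
    have hsum : 0 < y u + ys u := by linarith
    have : 2 * ((xm u) ^ 2 / ym u) = (x u + xs u) ^ 2 / (y u + ys u) := by
      simp only [hxm, hym]
      field_simp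
    linarith [h, this.le, this.ge]
  have hsum := Finset.sum_le_sum fun u (_ : u ∈ Finset.univ) => hptwise u
  calc gmin ^ 2 * ∑ u, (x u / y u - xs u / ys u) ^ 2
      ≤ ∑ u, ((x u) ^ 2 / y u + (xs u) ^ 2 / ys u - 2 * ((xm u) ^ 2 / ym u)) := by
        rw [Finset.mul_sum]; exact hsum
    _ = (∑ u, (x u) ^ 2 / y u) + (∑ u, (xs u) ^ 2 / ys u)
        - 2 * ∑ u, (xm u) ^ 2 / ym u := by
        rw [Finset.sum_sub_distrib, Finset.sum_add_distrib, Finset.mul_sum]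
    _ ≤ (∑ u, (x u) ^ 2 / y u) - ∑ u, (xs u) ^ 2 / ys u := by linarith
end

section
/- Let (V; f, g) be a dual-modular instance normalized so that f(V) = g(V) = 1, so that every allocation (x, y) ∈ B≥_f × B≤_g is a pair of probability distributions on V. Suppose D = (D_n)_{n∈ℕ} is a family of divergences, where each D_n assigns a real number D_n(P ‖ Q) ≥ 0 to every pair of probability distributions P, Q on an n-element set, with D_n(P ‖ Q) = 0 iff P = Q, and D satisfies the data processing inequality: for every row-stochastic n×m matrix T (T_{ij} ≥ 0, Σ_j T_{ij} = 1), acting on distributions by (TP)(j) = Σ_i P(i)·T_{ij}, one has D_m(TP ‖ TQ) ≤ D_n(P ‖ Q) for all distributions P, Q on an n-element set. Then every locally maximin allocation (x, y) minimizes D_{|V|}(x ‖ y) over all allocations in B≥_f × B≤_g. -/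
open Finset

variable {V : Type*} [Fintype V] [DecidableEq V]

/-!
Local maximinity makes each upper level set `{v | γ ≤ x v / y v}` tight for `f` and `g`, so
`HS γ x y ≤ HS γ x' y'` for every allocation `(x', y')` and every `γ`. By a Blackwell-type
argument this yields a row-stochastic `T` with `x' ᵥ* T = x` and `y' ᵥ* T = y`, and the data
processing inequality along `T` gives the claim.

If no such `T` existed, Hahn–Banach would separate `(x, y)` from the compact convex image of the
row-stochastic matrices by weights `α, β`; for the concave `ψ t = min_v (α v * t + β v)` this says
`Dtheta ψ x y < Dtheta ψ x' y'`. But on finitely many points a concave `ψ` is an affine function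
minus a nonnegative combination of hinges `t ↦ max (t - s) 0`, and against hinges the `HS`
inequalities give `Dtheta ψ x' y' ≤ Dtheta ψ x y`.
-/

theorem ConcaveOn.le_secant_of_le_of_lt {ψ : ℝ → ℝ} (hψ : ConcaveOn ℝ Set.univ ψ) {t m s : ℝ}
    (htm : t ≤ m) (hms : m < s) : ψ t ≤ ψ m + (ψ s - ψ m) / (s - m) * (t - m) := by
  rcases htm.lt_or_eq with htm | rfl
  · have hslope := hψ.slope_anti_adjacent (Set.mem_univ t) (Set.mem_univ s) htm hms
    rw [le_div_iff₀ (sub_pos.2 htm)] at hslope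
    linarith
  · simp

theorem sum_mul_max_sub_eq_zero_of_le {S : Finset ℝ} (w : ℝ → ℝ) {t : ℝ} (ht : ∀ s ∈ S, t ≤ s) :
    ∑ s ∈ S, w s * max (t - s) 0 = 0 :=
  sum_eq_zero fun s hs => by rw [max_eq_right (by linarith [ht s hs]), mul_zero]

/-- `le_left` is the invariant that makes the kink created by inserting a new leftmost point
nonnegative. -/
structure HingeRepr (ψ : ℝ → ℝ) (S : Finset ℝ) (a b : ℝ) (w : ℝ → ℝ) : Prop where
  nonneg : ∀ s, 0 ≤ w s
  eq_zero_of_notMem : ∀ s ∉ S, w s = 0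
  eq : ∀ t ∈ S, ψ t = a + b * t - ∑ s ∈ S, w s * max (t - s) 0
  le_left : ∀ t, (∀ s ∈ S, t ≤ s) → ψ t ≤ a + b * t

namespace HingeRepr

variable {ψ : ℝ → ℝ} {S : Finset ℝ} {a b : ℝ} {w : ℝ → ℝ}

theorem singleton (hψ : ConcaveOn ℝ Set.univ ψ) (m : ℝ) :
    HingeRepr ψ {m} (ψ m - (ψ (m + 1) - ψ m) * m) (ψ (m + 1) - ψ m) 0 where
  nonneg _ := le_rfl
  eq_zero_of_notMem _ _ := rfl
  eq := by simp
  le_left t ht := by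
    have := hψ.le_secant_of_le_of_lt (ht m (mem_singleton_self m)) (lt_add_one m)
    simp only [add_sub_cancel_left, div_one] at this
    linarith

theorem exists_insert (hψ : ConcaveOn ℝ Set.univ ψ) (h : HingeRepr ψ S a b w)
    (hS : S.Nonempty) {m : ℝ} (hmS : ∀ s ∈ S, m < s) :
    ∃ (a' b' : ℝ) (w' : ℝ → ℝ), HingeRepr ψ (insert m S) a' b' w' := by
  set s₁ := S.min' hS
  have hs₁ : s₁ ∈ S := S.min'_mem hS
  have hms₁ : m < s₁ := hmS s₁ hs₁
  have hgap : s₁ - m ≠ 0 := (sub_pos.2 hms₁).ne'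
  have hm_notMem : m ∉ S := fun h => lt_irrefl m (hmS m h)
  have hψs₁ : ψ s₁ = a + b * s₁ := by
    rw [h.eq s₁ hs₁, sum_mul_max_sub_eq_zero_of_le w fun s hs => S.min'_le s hs, sub_zero]
  -- a kink of weight `κ` at `s₁` fixes the value at `m` without changing anything on `S`
  set κ := (a + b * m - ψ m) / (s₁ - m)
  have hκ : 0 ≤ κ :=
    div_nonneg (by linarith [h.le_left m fun s hs => (hmS s hs).le]) (by linarith)
  have hsum : ∀ t, ∑ s ∈ insert m S, (w s + if s = s₁ then κ else 0) * max (t - s) 0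
      = ∑ s ∈ S, w s * max (t - s) 0 + κ * max (t - s₁) 0 := by
    intro t
    rw [sum_insert hm_notMem, h.eq_zero_of_notMem m hm_notMem, if_neg hms₁.ne]
    simp [add_mul, sum_add_distrib, hs₁]
  refine ⟨a - κ * s₁, b + κ, fun s => w s + if s = s₁ then κ else 0,
    ⟨fun s => add_nonneg (h.nonneg s) (by split_ifs <;> simp [hκ]), fun s hs => ?_, ?_, ?_⟩⟩
  · rw [h.eq_zero_of_notMem s fun h => hs (mem_insert_of_mem h),
      if_neg fun h : s = s₁ => hs (h ▸ mem_insert_of_mem hs₁), add_zero]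
  · intro t ht
    rw [hsum]
    rcases mem_insert.1 ht with rfl | ht
    · rw [sum_mul_max_sub_eq_zero_of_le w fun s hs => (hmS s hs).le, max_eq_right (by linarith)]
      simp only [κ]
      field_simp
      ring
    · rw [h.eq t ht, max_eq_left (by linarith [S.min'_le t ht])]
      ring
  · intro t ht
    calc ψ t ≤ ψ m + (ψ s₁ - ψ m) / (s₁ - m) * (t - m) :=
          hψ.le_secant_of_le_of_lt (ht m (mem_insert_self m S)) hms₁
      _ = a - κ * s₁ + (b + κ) * t := by
        simp only [κ, hψs₁]
        field_simp
        ring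

end HingeRepr

namespace ConcaveOn

variable {ψ : ℝ → ℝ}

theorem exists_hingeRepr (hψ : ConcaveOn ℝ Set.univ ψ) {S : Finset ℝ} (hS : S.Nonempty) :
    ∃ (a b : ℝ) (w : ℝ → ℝ), HingeRepr ψ S a b w := by
  induction S using Finset.induction_on_min with
  | empty => exact absurd hS not_nonempty_empty
  | insert m S hmS ih =>
    rcases S.eq_empty_or_nonempty with rfl | hS
    · exact ⟨_, _, _, HingeRepr.singleton hψ m⟩
    obtain ⟨a, b, w, h⟩ := ih hS
    exact h.exists_insert hψ hS hmS

theorem sum_mul_le_sum_mul_of_hinge {ι κ : Type*} [Fintype ι] [Fintype κ]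
    (hψ : ConcaveOn ℝ Set.univ ψ) (p s : ι → ℝ) (q t : κ → ℝ)
    (hmass : ∑ i, p i = ∑ j, q j) (hmean : ∑ i, p i * s i = ∑ j, q j * t j)
    (hhinge : ∀ γ, ∑ i, p i * max (s i - γ) 0 ≤ ∑ j, q j * max (t j - γ) 0) :
    ∑ j, q j * ψ (t j) ≤ ∑ i, p i * ψ (s i) := by
  classical
  set K : Finset ℝ := insert 0 (univ.image s ∪ univ.image t)
  obtain ⟨a, b, w, h⟩ := hψ.exists_hingeRepr (S := K) (insert_nonempty _ _)
  have hs : ∀ i, ψ (s i) = a + b * s i - ∑ k ∈ K, w k * max (s i - k) 0 :=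
    fun i => h.eq _ (by simp [K])
  have ht : ∀ j, ψ (t j) = a + b * t j - ∑ k ∈ K, w k * max (t j - k) 0 :=
    fun j => h.eq _ (by simp [K])
  simp only [hs, ht, mul_sub, mul_add, sum_sub_distrib, sum_add_distrib, mul_sum]
  rw [sum_comm (s := univ), sum_comm (s := univ)]
  have hK : ∑ k ∈ K, ∑ i, p i * (w k * max (s i - k) 0)
      ≤ ∑ k ∈ K, ∑ j, q j * (w k * max (t j - k) 0) := by
    refine sum_le_sum fun k _ => ?_
    simp only [mul_left_comm _ (w k), ← mul_sum]
    exact mul_le_mul_of_nonneg_left (hhinge k) (h.nonneg k)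
  have h1 : ∑ i, p i * a = ∑ j, q j * a := by rw [← sum_mul, ← sum_mul, hmass]
  have h2 : ∑ i, p i * (b * s i) = ∑ j, q j * (b * t j) := by
    simp only [mul_left_comm _ b, ← mul_sum, hmean]
  linarith

end ConcaveOn

theorem ConcaveOn.Dtheta_le_of_HS_le {ι : Type*} [Fintype ι] {ψ : ℝ → ℝ}
    (hψ : ConcaveOn ℝ Set.univ ψ) {x y x' y' : ι → ℝ} (hy : ∀ v, 0 < y v) (hy' : ∀ v, 0 < y' v)
    (hx_sum : ∑ v, x v = ∑ v, x' v) (hy_sum : ∑ v, y v = ∑ v, y' v)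
    (hHS : ∀ γ, HS γ x y ≤ HS γ x' y') : Dtheta ψ x' y' ≤ Dtheta ψ x y := by
  have hmean : ∀ {z w : ι → ℝ}, (∀ v, 0 < w v) → ∑ v, w v * (z v / w v) = ∑ v, z v :=
    fun hw => sum_congr rfl fun v _ => mul_div_cancel₀ _ (hw v).ne'
  have hhinge : ∀ {z w : ι → ℝ}, (∀ v, 0 < w v) →
      ∀ γ, ∑ v, w v * max (z v / w v - γ) 0 = HS γ z w := fun hw γ =>
    sum_congr rfl fun v _ => by
      rw [mul_max_of_nonneg _ _ (hw v).le, mul_zero, mul_sub, mul_div_cancel₀ _ (hw v).ne',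
        mul_comm]
  exact hψ.sum_mul_le_sum_mul_of_hinge y (fun v => x v / y v) y' (fun v => x' v / y' v) hy_sum
    (by rw [hmean hy, hmean hy', hx_sum]) fun γ => by rw [hhinge hy, hhinge hy']; exact hHS γ

namespace Matrix

theorem isCompact_rowStochastic :
    IsCompact (rowStochastic ℝ V : Set (Matrix V V ℝ)) := by
  have hpi : (rowStochastic ℝ V : Set (Matrix V V ℝ)) = Set.univ.pi fun _ => stdSimplex ℝ V := by
    ext M
    rw [SetLike.mem_coe, mem_rowStochastic_iff_sum, ← forall_and]
    exact ⟨fun h i _ => h i, fun h i => h i trivial⟩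
  rw [hpi]
  exact isCompact_univ_pi fun _ => isCompact_stdSimplex ℝ V

end Matrix

open Matrix

theorem exists_separating_weights_of_not_exists_rowStochastic {x y x' y' : V → ℝ}
    (h : ¬ ∃ T ∈ rowStochastic ℝ V, x' ᵥ* T = x ∧ y' ᵥ* T = y) :
    ∃ α β : V → ℝ, ∀ T ∈ rowStochastic ℝ V,
      ∑ v, (α v * x v + β v * y v) < ∑ v, (α v * (x' ᵥ* T) v + β v * (y' ᵥ* T) v) := by
  let Φ : Matrix V V ℝ →ₗ[ℝ] (V → ℝ) × (V → ℝ) :=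
    (vecMulBilin ℝ ℝ x').prod (vecMulBilin ℝ ℝ y')
  have hclosed : IsClosed (Φ '' rowStochastic ℝ V) :=
    (isCompact_rowStochastic.image Φ.continuous_of_finiteDimensional).isClosed
  have hxy : (x, y) ∉ Φ '' rowStochastic ℝ V := fun ⟨T, hT, hTxy⟩ =>
    h ⟨T, hT, congrArg Prod.fst hTxy, congrArg Prod.snd hTxy⟩
  obtain ⟨φ, r, hφxy, hφT⟩ :=
    geometric_hahn_banach_point_closed (convex_rowStochastic.linear_image Φ) hclosed hxy
  have hφ : ∀ z w : V → ℝ,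
      φ (z, w) = ∑ v, (φ (Pi.single v 1, 0) * z v + φ (0, Pi.single v 1) * w v) := by
    intro z w
    have hzw : (z, w) = ∑ v, (z v • (Pi.single v 1, 0) + w v • (0, Pi.single v 1)) := by
      ext u <;> simp [Prod.fst_sum, Prod.snd_sum, Finset.sum_apply, Pi.single_apply]
    rw [hzw, map_sum]
    simp only [map_add, map_smul, smul_eq_mul, mul_comm]
  refine ⟨fun v => φ (Pi.single v 1, 0), fun v => φ (0, Pi.single v 1), fun T hT => ?_⟩
  rw [← hφ, ← hφ]
  exact hφxy.trans (hφT _ ⟨T, hT, rfl⟩)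

theorem concaveOn_inf'_affine {ι : Type*} {S : Finset ι} (hS : S.Nonempty) (α β : ι → ℝ) :
    ConcaveOn ℝ Set.univ fun t => S.inf' hS fun i => α i * t + β i := by
  refine ⟨convex_univ, fun s _ t _ a b ha hb hab => le_inf' _ _ fun i hi => ?_⟩
  calc a • S.inf' hS (fun i => α i * s + β i) + b • S.inf' hS (fun i => α i * t + β i)
      ≤ a • (α i * s + β i) + b • (α i * t + β i) := by
        gcongr <;> exact inf'_le _ hi
    _ = α i * (a • s + b • t) + β i := by
        simp only [smul_eq_mul]
        linear_combination β i * hab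

theorem exists_rowStochastic_of_HS_le {x y x' y' : V → ℝ} (hy : ∀ v, 0 < y v)
    (hy' : ∀ v, 0 < y' v) (hx_sum : ∑ v, x v = ∑ v, x' v) (hy_sum : ∑ v, y v = ∑ v, y' v)
    (hHS : ∀ γ, HS γ x y ≤ HS γ x' y') :
    ∃ T ∈ rowStochastic ℝ V, x' ᵥ* T = x ∧ y' ᵥ* T = y := by
  rcases isEmpty_or_nonempty V with hV | hV
  · exact ⟨1, one_mem _, Subsingleton.elim _ _, Subsingleton.elim _ _⟩
  by_contra hno
  obtain ⟨α, β, hsep⟩ := exists_separating_weights_of_not_exists_rowStochastic hno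
  let ψ : ℝ → ℝ := fun t => univ.inf' univ_nonempty fun v => α v * t + β v
  have hψ : ConcaveOn ℝ Set.univ ψ := concaveOn_inf'_affine univ_nonempty α β
  choose v₀ hv₀ using fun u =>
    exists_mem_eq_inf' univ_nonempty fun v => α v * (x' u / y' u) + β v
  let T₀ : Matrix V V ℝ := fun u => Pi.single (v₀ u) 1
  have hT₀ : T₀ ∈ rowStochastic ℝ V := by
    refine mem_rowStochastic_iff_sum.2 ⟨fun u v => ?_, fun u => by simp [T₀]⟩
    simp only [T₀, Pi.single_apply]
    split_ifs <;> norm_num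
  have hvecMul : ∀ z γ : V → ℝ, ∑ v, γ v * (z ᵥ* T₀) v = ∑ u, γ (v₀ u) * z u := by
    intro z γ
    simp only [vecMul, dotProduct, T₀, mul_sum]
    rw [sum_comm]
    simp [Pi.single_apply, mul_comm]
  have hxy : Dtheta ψ x y ≤ ∑ v, (α v * x v + β v * y v) := sum_le_sum fun v _ => by
    calc y v * ψ (x v / y v) ≤ y v * (α v * (x v / y v) + β v) :=
          mul_le_mul_of_nonneg_left (inf'_le _ (mem_univ v)) (hy v).le
      _ = α v * x v + β v * y v := by field_simp [(hy v).ne']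
  have hxy' : ∑ v, (α v * (x' ᵥ* T₀) v + β v * (y' ᵥ* T₀) v) = Dtheta ψ x' y' := by
    rw [sum_add_distrib, hvecMul, hvecMul, ← sum_add_distrib, Dtheta]
    refine sum_congr rfl fun u _ => ?_
    change _ = y' u * (univ.inf' _ _)
    rw [(hv₀ u).2]
    field_simp [(hy' u).ne']
  linarith [hsep T₀ hT₀, hψ.Dtheta_le_of_HS_le hy hy' hx_sum hy_sum hHS]

theorem HS_eq_sum_filter {ι : Type*} [Fintype ι] {x y : ι → ℝ} (hy : ∀ v, 0 < y v) (γ : ℝ) :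
    HS γ x y = ∑ v ∈ univ.filter (fun v => γ ≤ x v / y v), (x v - γ * y v) := by
  rw [HS, sum_filter]
  refine sum_congr rfl fun v _ => ?_
  split_ifs with h
  · exact max_eq_left (by rw [le_div_iff₀ (hy v)] at h; linarith)
  · exact max_eq_right (by rw [le_div_iff₀ (hy v)] at h; linarith)

theorem memBg.pos {g : Finset V → ℝ} {y : V → ℝ} (hg : StrictMonoFn g) (hy : memBg g y) (v : V) :
    0 < y v := by
  obtain ⟨-, hy_univ, hy_le⟩ := hy
  have hlt : g (univ.erase v) < g univ := hg _ _ (erase_ssubset (mem_univ v))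
  have hsplit := sum_erase_add univ y (mem_univ v)
  linarith [hy_le (univ.erase v)]

theorem LocallyMaximin.HS_le {ι : Type*} [Fintype ι] {f g : Finset ι → ℝ} {x y x' y' : ι → ℝ}
    (hlm : LocallyMaximin f g x y) (hxy : Allocation f g x y) (hxy' : Allocation f g x' y')
    (hy : ∀ v, 0 < y v) (γ : ℝ) : HS γ x y ≤ HS γ x' y' := by
  set S := univ.filter fun v => γ ≤ x v / y v
  have hS : ∑ v ∈ S, x v ≤ ∑ v ∈ S, x' v ∧ γ * ∑ v ∈ S, y' v ≤ γ * ∑ v ∈ S, y v := by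
    rcases le_or_gt γ 0 with hγ | hγ
    · have hS_univ : S = univ :=
        filter_true_of_mem fun v _ => hγ.trans (div_nonneg (hxy.1.1 v) (hy v).le)
      rw [hS_univ, hxy.1.2.1, hxy'.1.2.1, hxy.2.2.1, hxy'.2.2.1]
      exact ⟨le_rfl, le_rfl⟩
    · obtain ⟨hfS, hgS⟩ := hlm γ hγ
      exact ⟨hfS ▸ hxy'.1.2.2 S, hgS ▸ mul_le_mul_of_nonneg_left (hxy'.2.2.2 S) hγ.le⟩
  calc HS γ x y = ∑ v ∈ S, (x v - γ * y v) := HS_eq_sum_filter hy γ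
    _ ≤ ∑ v ∈ S, (x' v - γ * y' v) := by
      rw [sum_sub_distrib, sum_sub_distrib, ← mul_sum, ← mul_sum]
      linarith
    _ ≤ ∑ v ∈ S, max (x' v - γ * y' v) 0 := sum_le_sum fun v _ => le_max_left _ _
    _ ≤ HS γ x' y' :=
      sum_le_sum_of_subset_of_nonneg (subset_univ S) fun _ _ _ => le_max_right _ _

theorem universal_minimizer_data_processing_general (f g : Finset V → ℝ)
    (hdm : DualModular f g)
    (hfV : f Finset.univ = 1) (hgV : g Finset.univ = 1)
    (D : (n : ℕ) → (Fin n → ℝ) → (Fin n → ℝ) → ℝ)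
    (hdpi : ∀ (n m : ℕ) (T : Fin n → Fin m → ℝ), (∀ i j, 0 ≤ T i j) →
      (∀ i, ∑ j, T i j = 1) →
      ∀ (P Q : Fin n → ℝ), (∀ i, 0 ≤ P i) → (∑ i, P i = 1) →
        (∀ i, 0 ≤ Q i) → (∑ i, Q i = 1) →
        D m (fun j => ∑ i, P i * T i j) (fun j => ∑ i, Q i * T i j) ≤ D n P Q)
    (x y : V → ℝ) (halloc : Allocation f g x y) (hlm : LocallyMaximin f g x y) :
    ∀ x' y' : V → ℝ, Allocation f g x' y' →
      D (Fintype.card V) (fun i => x ((Fintype.equivFin V).symm i))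
          (fun i => y ((Fintype.equivFin V).symm i)) ≤
        D (Fintype.card V) (fun i => x' ((Fintype.equivFin V).symm i))
          (fun i => y' ((Fintype.equivFin V).symm i)) := by
  intro x' y' halloc'
  have hy := halloc.2.pos hdm.g_strictMono
  have hy' := halloc'.2.pos hdm.g_strictMono
  obtain ⟨T, hT, hTx, hTy⟩ := exists_rowStochastic_of_HS_le hy hy'
    (halloc.1.2.1.trans halloc'.1.2.1.symm) (halloc.2.2.1.trans halloc'.2.2.1.symm)
    (hlm.HS_le halloc halloc' hy)
  set e := (Fintype.equivFin V).symm
  have hdpi_T := hdpi _ _ (T.submatrix e e) (fun _ _ => nonneg_of_mem_rowStochastic hT)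
    (fun i => (e.sum_comp (T (e i))).trans (sum_row_of_mem_rowStochastic hT (e i)))
    (x' ∘ e) (y' ∘ e) (fun _ => halloc'.1.1 _) ((e.sum_comp x').trans (halloc'.1.2.1.trans hfV))
    (fun _ => (hy' _).le) ((e.sum_comp y').trans (halloc'.2.2.1.trans hgV))
  change D _ ((x' ∘ e) ᵥ* T.submatrix e e) ((y' ∘ e) ᵥ* T.submatrix e e) ≤ _ at hdpi_T
  rw [submatrix_vecMul_equiv, submatrix_vecMul_equiv] at hdpi_T
  simp only [Function.comp_assoc, Equiv.self_comp_symm, Function.comp_id, hTx, hTy] at hdpi_T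
  exact hdpi_T

/-- Theorem 1.5: any locally maximin allocation minimizes `D(x ‖ y)`
over all allocations, for every family `D` of divergences satisfying the data
processing inequality. -/
theorem universal_minimizer_data_processing (f g : Finset V → ℝ)
    (hdm : DualModular f g)
    (hfV : f Finset.univ = 1) (hgV : g Finset.univ = 1)
    (D : (n : ℕ) → (Fin n → ℝ) → (Fin n → ℝ) → ℝ)
    (hnonneg : ∀ (n : ℕ) (P Q : Fin n → ℝ), (∀ i, 0 ≤ P i) → (∑ i, P i = 1) →
      (∀ i, 0 ≤ Q i) → (∑ i, Q i = 1) → 0 ≤ D n P Q)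
    (heq : ∀ (n : ℕ) (P Q : Fin n → ℝ), (∀ i, 0 ≤ P i) → (∑ i, P i = 1) →
      (∀ i, 0 ≤ Q i) → (∑ i, Q i = 1) → (D n P Q = 0 ↔ P = Q))
    (hdpi : ∀ (n m : ℕ) (T : Fin n → Fin m → ℝ), (∀ i j, 0 ≤ T i j) →
      (∀ i, ∑ j, T i j = 1) →
      ∀ (P Q : Fin n → ℝ), (∀ i, 0 ≤ P i) → (∑ i, P i = 1) →
        (∀ i, 0 ≤ Q i) → (∑ i, Q i = 1) →
        D m (fun j => ∑ i, P i * T i j) (fun j => ∑ i, Q i * T i j) ≤ D n P Q)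
    (x y : V → ℝ) (halloc : Allocation f g x y) (hlm : LocallyMaximin f g x y) :
    ∀ x' y' : V → ℝ, Allocation f g x' y' →
      D (Fintype.card V) (fun i => x ((Fintype.equivFin V).symm i))
          (fun i => y ((Fintype.equivFin V).symm i)) ≤
        D (Fintype.card V) (fun i => x' ((Fintype.equivFin V).symm i))
          (fun i => y' ((Fintype.equivFin V).symm i)) :=
  universal_minimizer_data_processing_general f g hdm hfV hgV D hdpi x y halloc hlm
end
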